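/- arXiv:2510.24104 — 5 statements merged into one kernel-verified Lean document; each statement's English description precedes it below -/
import Mathlib

section
/- Let z₀ ∈ ℂ and 0 < ρ₀ < ρ₁, let D₁ = {z : |z−z₀| < ρ₁} be the open disk and R = {z : ρ₀ < |z−z₀| < ρ₁} the open annulus. Let H : ℝ → ℂ → ℂ be such that for each u > 0 the map z ↦ H(u,z) is analytic on D₁, and let (h_s)_{s≥0} be a sequence of functions analytic on R. Suppose that for every n ≥ 1 there exist constants C_n > 0 and u_n > 0 such that |H(u,z) − Σ_{s=0}^{n−1} h_s(z) u^{−s}| ≤ C_n u^{−n} for all u ≥ u_n and all z ∈ R. Then each h_s extends to a function ĥ_s analytic on all of D₁ (agreeing with h_s on R), and for every n ≥ 1, |H(u,z) − Σ_{s=0}^{n−1} ĥ_s(z) u^{−s}| ≤ C_n u^{−n} holds for all u ≥ u_n and all z ∈ D₁. -/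
/-!
Induct on `s`. Once `h₀, …, h_{n-1}` are continued to `ĥ₀, …, ĥ_{n-1}` on the disk, the functions
`Fᵤ = uⁿ (H(u, ·) - ∑_{s<n} ĥ_s u⁻ˢ)` are holomorphic on the disk and converge to `hₙ` uniformly on
the annulus, with error `O(1/u)`. Every circle `|z - z₀| = ρ'` with `ρ₀ < ρ' < ρ₁` lies in the
annulus, so by the maximum modulus principle `Fᵤ` is uniformly Cauchy on the whole disk; its limit
is the holomorphic continuation `ĥₙ`. The same principle carries the remainder bounds from the
annulus to the disk.
-/

open Filter Finset Metric Set Topology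

theorem differentiableOn_sub_sum_mul {U : Set ℂ} {f : ℂ → ℂ} {a : ℕ → ℂ → ℂ} {c : ℕ → ℂ} {n : ℕ}
    (hf : DifferentiableOn ℂ f U) (ha : ∀ s < n, DifferentiableOn ℂ (a s) U) :
    DifferentiableOn ℂ (fun z => f z - ∑ s ∈ range n, a s z * c s) U :=
  hf.sub (DifferentiableOn.fun_sum fun s hs => (ha s (mem_range.mp hs)).mul_const _)

namespace Complex

def annulus (z₀ : ℂ) (ρ₀ ρ₁ : ℝ) : Set ℂ := {z | ρ₀ < dist z z₀ ∧ dist z z₀ < ρ₁}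

variable {z₀ : ℂ} {ρ₀ ρ₁ : ℝ}

theorem norm_le_of_forall_mem_annulus_norm_le {E : Type*} [NormedAddCommGroup E]
    [NormedSpace ℂ E] {f : ℂ → E} (hρ : ρ₀ < ρ₁) (hf : DifferentiableOn ℂ f (ball z₀ ρ₁))
    {M : ℝ} (hM : ∀ z ∈ annulus z₀ ρ₀ ρ₁, ‖f z‖ ≤ M)
    {z : ℂ} (hz : z ∈ ball z₀ ρ₁) : ‖f z‖ ≤ M := by
  obtain ⟨ρ, hρ_gt, hρ_lt⟩ := exists_between (max_lt (mem_ball.mp hz) hρ)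
  have hρ_pos : 0 < ρ := dist_nonneg.trans_lt ((le_max_left _ _).trans_lt hρ_gt)
  refine norm_le_of_forall_mem_frontier_norm_le isBounded_ball
    (hf.diffContOnCl_ball (closedBall_subset_ball hρ_lt)) (fun w hw => hM w ?_)
    (subset_closure (mem_ball.mpr ((le_max_left _ _).trans_lt hρ_gt)))
  rw [frontier_ball z₀ hρ_pos.ne', mem_sphere] at hw
  exact ⟨hw ▸ (le_max_right _ _).trans_lt hρ_gt, hw ▸ hρ_lt⟩

theorem exists_analyticOnNhd_eqOn_of_tendstoUniformlyOn_annulus {ι : Type*} {p : Filter ι}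
    [p.NeBot] {F : ι → ℂ → ℂ} {g : ℂ → ℂ} (hρ : ρ₀ < ρ₁)
    (hF : ∀ᶠ i in p, DifferentiableOn ℂ (F i) (ball z₀ ρ₁))
    (hFg : TendstoUniformlyOn F g p (annulus z₀ ρ₀ ρ₁)) :
    ∃ G, AnalyticOnNhd ℂ G (ball z₀ ρ₁) ∧
      EqOn G g (annulus z₀ ρ₀ ρ₁) := by
  have hcauchy : UniformCauchySeqOn F p (ball z₀ ρ₁) := by
    intro V hV
    obtain ⟨ε, hε, hεV⟩ := mem_uniformity_dist.mp hV
    filter_upwards [hFg.uniformCauchySeqOn _ (dist_mem_uniformity (half_pos hε)),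
      hF.prod_inl p, hF.prod_inr p] with m hm hm₁ hm₂ z hz
    refine hεV ((dist_eq_norm _ _).trans_lt ?_)
    refine (norm_le_of_forall_mem_annulus_norm_le hρ (hm₁.sub hm₂) (fun w hw => ?_) hz).trans_lt
      (half_lt_self hε)
    exact ((dist_eq_norm _ _).symm.trans_le (hm w hw).le)
  have hlim : TendstoUniformlyOn F (fun z => limUnder p (F · z)) p (ball z₀ ρ₁) :=
    hcauchy.tendstoUniformlyOn_of_tendsto fun z hz =>
      tendsto_nhds_limUnder (CompleteSpace.complete (hcauchy.cauchy_map hz))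
  refine ⟨_, (hlim.tendstoLocallyUniformlyOn.differentiableOn hF isOpen_ball).analyticOnNhd
    isOpen_ball, fun z hz => ?_⟩
  exact tendsto_nhds_unique (hlim.tendsto_at (mem_ball.mpr hz.2)) (hFg.tendsto_at hz)

variable {H : ℝ → ℂ → ℂ} {h a : ℕ → ℂ → ℂ} {n : ℕ} {C u₀ : ℝ}

theorem tendstoUniformlyOn_pow_mul_sub_sum
    (hah : ∀ s < n, EqOn (a s) (h s) (annulus z₀ ρ₀ ρ₁))
    (hbound : ∀ u : ℝ, u₀ ≤ u → ∀ z ∈ annulus z₀ ρ₀ ρ₁,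
      ‖H u z - ∑ s ∈ range (n + 1), h s z * (u : ℂ) ^ (-(s : ℤ))‖ ≤
        C * u ^ (-((n + 1 : ℕ) : ℤ))) :
    TendstoUniformlyOn
      (fun (u : ℝ) z => (u : ℂ) ^ n * (H u z - ∑ s ∈ range n, a s z * (u : ℂ) ^ (-(s : ℤ))))
      (h n) atTop (annulus z₀ ρ₀ ρ₁) := by
  rw [Metric.tendstoUniformlyOn_iff]
  intro ε hε
  have hsmall : ∀ᶠ u : ℝ in atTop, C * u⁻¹ < ε :=
    (tendsto_inv_atTop_zero.const_mul C).eventually_lt_const (by simpa using hε)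
  filter_upwards [eventually_ge_atTop u₀, eventually_gt_atTop 0, hsmall] with u hu₀u hu hCu z hz
  have hu' : (u : ℂ) ≠ 0 := ofReal_ne_zero.mpr hu.ne'
  have hshift : (u : ℂ) ^ n * (H u z - ∑ s ∈ range n, a s z * (u : ℂ) ^ (-(s : ℤ))) - h n z
      = (u : ℂ) ^ n * (H u z - ∑ s ∈ range (n + 1), h s z * (u : ℂ) ^ (-(s : ℤ))) := by
    rw [sum_range_succ, sum_congr rfl fun s hs => by rw [hah s (mem_range.mp hs) hz]]
    have : (u : ℂ) ^ n * (u : ℂ) ^ (-(n : ℤ)) = 1 := by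
      rw [zpow_neg, zpow_natCast, mul_inv_cancel₀ (pow_ne_zero _ hu')]
    linear_combination h n z * this
  rw [dist_comm, dist_eq_norm, hshift, norm_mul, norm_pow, norm_real, Real.norm_of_nonneg hu.le]
  calc u ^ n * ‖H u z - ∑ s ∈ range (n + 1), h s z * (u : ℂ) ^ (-(s : ℤ))‖
      ≤ u ^ n * (C * u ^ (-((n + 1 : ℕ) : ℤ))) := by gcongr; exact hbound u hu₀u z hz
    _ = C * u⁻¹ := by
      rw [zpow_neg, zpow_natCast, pow_succ]
      field_simp
    _ < ε := hCu

theorem exists_analyticOnNhd_eqOn_of_asymptotic_bound (hρ : ρ₀ < ρ₁)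
    (hH : ∀ u : ℝ, 0 < u → DifferentiableOn ℂ (H u) (ball z₀ ρ₁))
    (ha : ∀ s < n, DifferentiableOn ℂ (a s) (ball z₀ ρ₁))
    (hah : ∀ s < n, EqOn (a s) (h s) (annulus z₀ ρ₀ ρ₁))
    (hbound : ∀ u : ℝ, u₀ ≤ u → ∀ z ∈ annulus z₀ ρ₀ ρ₁,
      ‖H u z - ∑ s ∈ range (n + 1), h s z * (u : ℂ) ^ (-(s : ℤ))‖ ≤
        C * u ^ (-((n + 1 : ℕ) : ℤ))) :
    ∃ g, AnalyticOnNhd ℂ g (ball z₀ ρ₁) ∧ EqOn g (h n) (annulus z₀ ρ₀ ρ₁) := by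
  refine exists_analyticOnNhd_eqOn_of_tendstoUniformlyOn_annulus hρ ?_
    (tendstoUniformlyOn_pow_mul_sub_sum hah hbound)
  filter_upwards [eventually_gt_atTop 0] with u hu
  exact (differentiableOn_sub_sum_mul (hH u hu) ha).const_mul _

end Complex

theorem stmt_0_general (z₀ : ℂ) (ρ₀ ρ₁ : ℝ) (hρ : ρ₀ < ρ₁)
    (H : ℝ → ℂ → ℂ) (h : ℕ → ℂ → ℂ)
    (hH : ∀ u : ℝ, 0 < u → AnalyticOnNhd ℂ (H u) (Metric.ball z₀ ρ₁))
    (C u₀ : ℕ → ℝ)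
    (hu₀ : ∀ n : ℕ, 1 ≤ n → 0 < u₀ n)
    (hbound : ∀ n : ℕ, 1 ≤ n → ∀ u : ℝ, u₀ n ≤ u →
      ∀ z ∈ {z : ℂ | ρ₀ < dist z z₀ ∧ dist z z₀ < ρ₁},
        ‖H u z - ∑ s ∈ Finset.range n, h s z * (u : ℂ) ^ (-(s : ℤ))‖
          ≤ C n * u ^ (-(n : ℤ))) :
    ∃ hhat : ℕ → ℂ → ℂ,
      (∀ s : ℕ, AnalyticOnNhd ℂ (hhat s) (Metric.ball z₀ ρ₁)) ∧
      (∀ s : ℕ, ∀ z ∈ {z : ℂ | ρ₀ < dist z z₀ ∧ dist z z₀ < ρ₁}, hhat s z = h s z) ∧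
      (∀ n : ℕ, 1 ≤ n → ∀ u : ℝ, u₀ n ≤ u →
        ∀ z ∈ Metric.ball z₀ ρ₁,
          ‖H u z - ∑ s ∈ Finset.range n, hhat s z * (u : ℂ) ^ (-(s : ℤ))‖
            ≤ C n * u ^ (-(n : ℤ))) := by
  have hHd u hu := (hH u hu).differentiableOn
  have hext : ∀ n, ∃ a : ℕ → ℂ → ℂ, ∀ s < n, AnalyticOnNhd ℂ (a s) (ball z₀ ρ₁) ∧
      EqOn (a s) (h s) (Complex.annulus z₀ ρ₀ ρ₁) := by
    intro n
    induction n with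
    | zero => exact ⟨h, by simp⟩
    | succ n ih =>
      obtain ⟨a, ha⟩ := ih
      obtain ⟨g, hg⟩ := Complex.exists_analyticOnNhd_eqOn_of_asymptotic_bound hρ hHd
        (fun s hs => (ha s hs).1.differentiableOn) (fun s hs => (ha s hs).2)
        (hbound (n + 1) (Nat.le_add_left 1 n))
      refine ⟨Function.update a n g, fun s hs => ?_⟩
      rcases Nat.lt_succ_iff_lt_or_eq.mp hs with hs | rfl
      · simpa [Function.update_of_ne hs.ne] using ha s hs
      · simpa using hg
  choose a ha using hext
  refine ⟨fun s => a (s + 1) s, fun s => (ha _ s s.lt_succ_self).1,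
    fun s => (ha _ s s.lt_succ_self).2, fun n hn u hu z hz => ?_⟩
  refine Complex.norm_le_of_forall_mem_annulus_norm_le hρ (differentiableOn_sub_sum_mul
    (hHd u ((hu₀ n hn).trans_le hu)) fun s _ => (ha _ s s.lt_succ_self).1.differentiableOn)
    (fun w hw => ?_) hz
  rw [sum_congr rfl fun s _ => by rw [(ha _ s s.lt_succ_self).2 hw]]
  exact hbound n hn u hu w hw

/-- Theorem 2 of the paper: a function analytic on a disk whose uniform asymptotic
expansion in inverse powers of a large parameter `u` is known on an annulus inside
the disk has that expansion, with analytically continued coefficients, on the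
whole disk. -/
theorem stmt_0 (z₀ : ℂ) (ρ₀ ρ₁ : ℝ) (hρ₀ : 0 < ρ₀) (hρ : ρ₀ < ρ₁)
    (H : ℝ → ℂ → ℂ) (h : ℕ → ℂ → ℂ)
    (hH : ∀ u : ℝ, 0 < u → AnalyticOnNhd ℂ (H u) (Metric.ball z₀ ρ₁))
    (hh : ∀ s : ℕ, AnalyticOnNhd ℂ (h s) {z : ℂ | ρ₀ < dist z z₀ ∧ dist z z₀ < ρ₁})
    (C u₀ : ℕ → ℝ)
    (hC : ∀ n : ℕ, 1 ≤ n → 0 < C n)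
    (hu₀ : ∀ n : ℕ, 1 ≤ n → 0 < u₀ n)
    (hbound : ∀ n : ℕ, 1 ≤ n → ∀ u : ℝ, u₀ n ≤ u →
      ∀ z ∈ {z : ℂ | ρ₀ < dist z z₀ ∧ dist z z₀ < ρ₁},
        ‖H u z - ∑ s ∈ Finset.range n, h s z * (u : ℂ) ^ (-(s : ℤ))‖
          ≤ C n * u ^ (-(n : ℤ))) :
    ∃ hhat : ℕ → ℂ → ℂ,
      (∀ s : ℕ, AnalyticOnNhd ℂ (hhat s) (Metric.ball z₀ ρ₁)) ∧
      (∀ s : ℕ, ∀ z ∈ {z : ℂ | ρ₀ < dist z z₀ ∧ dist z z₀ < ρ₁}, hhat s z = h s z) ∧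
      (∀ n : ℕ, 1 ≤ n → ∀ u : ℝ, u₀ n ≤ u →
        ∀ z ∈ Metric.ball z₀ ρ₁,
          ‖H u z - ∑ s ∈ Finset.range n, hhat s z * (u : ℂ) ^ (-(s : ℤ))‖
            ≤ C n * u ^ (-(n : ℤ))) :=
  stmt_0_general z₀ ρ₀ ρ₁ hρ H h hH C u₀ hu₀ hbound
end

section
/- Let α ≥ 0 and let ζ be real with ζ ≠ 0 and ζ ≠ α². Define f̂(ζ) = α²/(4ζ²) − 1/(4ζ) and g̃(ζ) = α²(4ζ − α²)/(4(ζ − α²)²ζ²). Then, with primes denoting derivatives with respect to ζ, (4·f̂(ζ)·f̂''(ζ) − 5·f̂'(ζ)²)/(16·f̂(ζ)³) + g̃(ζ)/f̂(ζ) = −ζ(3ζ + 4α²)/(4(ζ − α²)³). -/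
/-! `f̂ = (α² − ζ)/(4ζ²)` and its first two derivatives are explicit rational functions of `ζ`,
and `f̂` vanishes only at `ζ = α²`; away from `ζ = 0` and `ζ = α²` the claim is therefore an
identity between rational functions, checked by clearing denominators. -/

/-- The comparison-equation function `f̂(α,ζ) = α²/(4ζ²) − 1/(4ζ)` (equation (50)). -/
noncomputable def fhat (α ζ : ℝ) : ℝ := α ^ 2 / (4 * ζ ^ 2) - 1 / (4 * ζ)

/-- `g̃(ζ) = α²(4ζ − α²)/(4(ζ − α²)²ζ²)` (equation (67)). -/
noncomputable def gtilde (α ζ : ℝ) : ℝ :=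
  α ^ 2 * (4 * ζ - α ^ 2) / (4 * (ζ - α ^ 2) ^ 2 * ζ ^ 2)

theorem hasDerivAt_fhat (α : ℝ) {ζ : ℝ} (hζ : ζ ≠ 0) :
    HasDerivAt (fhat α) (1 / (4 * ζ ^ 2) - α ^ 2 / (2 * ζ ^ 3)) ζ := by
  have h := ((hasDerivAt_const ζ (α ^ 2)).fun_div ((hasDerivAt_pow 2 ζ).const_mul 4)
    (by positivity)).fun_sub
      ((hasDerivAt_const ζ (1 : ℝ)).fun_div ((hasDerivAt_id' ζ).const_mul 4) (by simpa))
  refine h.congr_deriv ?_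
  field_simp
  ring

theorem deriv_fhat (α : ℝ) {ζ : ℝ} (hζ : ζ ≠ 0) :
    deriv (fhat α) ζ = 1 / (4 * ζ ^ 2) - α ^ 2 / (2 * ζ ^ 3) :=
  (hasDerivAt_fhat α hζ).deriv

theorem deriv_deriv_fhat (α : ℝ) {ζ : ℝ} (hζ : ζ ≠ 0) :
    deriv (deriv (fhat α)) ζ = 3 * α ^ 2 / (2 * ζ ^ 4) - 1 / (2 * ζ ^ 3) := by
  have hloc : deriv (fhat α) =ᶠ[nhds ζ] fun y => 1 / (4 * y ^ 2) - α ^ 2 / (2 * y ^ 3) := by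
    filter_upwards [eventually_ne_nhds hζ] with y hy using deriv_fhat α hy
  have h := ((hasDerivAt_const ζ (1 : ℝ)).fun_div ((hasDerivAt_pow 2 ζ).const_mul 4)
    (by positivity)).fun_sub
      ((hasDerivAt_const ζ (α ^ 2)).fun_div ((hasDerivAt_pow 3 ζ).const_mul 2) (by simpa))
  rw [hloc.deriv_eq, h.deriv]
  field_simp
  ring

theorem fhat_eq (α : ℝ) {ζ : ℝ} (hζ : ζ ≠ 0) : fhat α ζ = (α ^ 2 - ζ) / (4 * ζ ^ 2) := by
  unfold fhat
  field_simp

theorem stmt_7_general (α ζ : ℝ) (hζ0 : ζ ≠ 0) (hζα : ζ ≠ α ^ 2) :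
    (4 * fhat α ζ * deriv (deriv (fhat α)) ζ - 5 * (deriv (fhat α) ζ) ^ 2)
        / (16 * (fhat α ζ) ^ 3) + gtilde α ζ / fhat α ζ
      = -(ζ * (3 * ζ + 4 * α ^ 2)) / (4 * (ζ - α ^ 2) ^ 3) := by
  have hsub : α ^ 2 - ζ ≠ 0 := sub_ne_zero.mpr hζα.symm
  rw [deriv_deriv_fhat α hζ0, deriv_fhat α hζ0, fhat_eq α hζ0, gtilde]
  field_simp
  ring

/-- Equation (70) of the paper: the error-control function for the derivatives of the
Bessel comparison functions is `ψ̃(α,ζ) = −ζ(3ζ + 4α²)/(4(ζ − α²)³)`. -/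
theorem stmt_7 (α ζ : ℝ) (hα : 0 ≤ α) (hζ0 : ζ ≠ 0) (hζα : ζ ≠ α ^ 2) :
    (4 * fhat α ζ * deriv (deriv (fhat α)) ζ - 5 * (deriv (fhat α) ζ) ^ 2)
        / (16 * (fhat α ζ) ^ 3) + gtilde α ζ / fhat α ζ
      = -(ζ * (3 * ζ + 4 * α ^ 2)) / (4 * (ζ - α ^ 2) ^ 3) :=
  stmt_7_general α ζ hζ0 hζα
end

section
/- Let 0 < α < 1, σ = √(1−α²), and σ < t < 1. Then the function t ↦ α·arctanh(√(t²−σ²)/(αt)) − arccosh(t/σ) is differentiable on (σ,1) with derivative √(t²−σ²)/(1−t²). Equivalently, dξ/dt = √(t²−σ²)/(1−t²), where ξ(t) = α·arctanh(√(t²−σ²)/(αt)) − arccosh(t/σ). -/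
/-- The real inverse hyperbolic tangent, `arctanh x = (1/2)ln((1+x)/(1−x))`. -/
noncomputable def arctanh (x : ℝ) : ℝ := (1 / 2) * Real.log ((1 + x) / (1 - x))

/-- The real inverse hyperbolic cosine, `arccosh x = ln(x + √(x²−1))`. -/
noncomputable def arccosh (x : ℝ) : ℝ := Real.log (x + Real.sqrt (x ^ 2 - 1))

/-!
Write `r = √(t² − σ²)` and use `α² + σ² = 1`. The argument `u = r / (α t)` of `arctanh` satisfies
`1 − u² = σ² (1 − t²) / (α t)²` and `u' = σ² / (α r t²)`, so the first term has derivative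
`α² / (r (1 − t²))`, while `arccosh (t / σ)` has derivative `1 / r`. The difference is
`(α² − 1 + t²) / (r (1 − t²)) = r / (1 − t²)`.
-/

open Real Set

lemma hasDerivAt_arctanh {x : ℝ} (hx : x ∈ Ioo (-1) 1) :
    HasDerivAt arctanh (1 - x ^ 2)⁻¹ x := by
  obtain ⟨hx₁, hx₂⟩ := hx
  have hpos : 0 < 1 - x := by linarith
  have hquot : HasDerivAt (fun y => (1 + y) / (1 - y))
      ((1 * (1 - x) - (1 + x) * -1) / (1 - x) ^ 2) x :=
    ((hasDerivAt_id' x).const_add 1).div ((hasDerivAt_id' x).const_sub 1) hpos.ne'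
  refine ((hquot.log (div_pos (by linarith) hpos).ne').const_mul (1 / 2)).congr_deriv ?_
  have : 1 + x ≠ 0 := by linarith
  have : 1 - x ^ 2 ≠ 0 := by nlinarith
  field_simp
  ring

lemma hasDerivAt_sqrt_sq_sub {c t : ℝ} (h : 0 < t ^ 2 - c) :
    HasDerivAt (fun s => √(s ^ 2 - c)) (t / √(t ^ 2 - c)) t := by
  convert ((hasDerivAt_pow 2 t).sub_const c).sqrt h.ne' using 1
  ring

lemma hasDerivAt_arctanh_sqrt_sq_sub_div {α σ t : ℝ} (hα : 0 < α) (hσ : 0 < σ)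
    (hασ : α ^ 2 + σ ^ 2 = 1) (hσt : σ < t) (ht : t < 1) :
    HasDerivAt (fun s => arctanh (√(s ^ 2 - σ ^ 2) / (α * s)))
      (α / (√(t ^ 2 - σ ^ 2) * (1 - t ^ 2))) t := by
  have ht₀ : 0 < t := hσ.trans hσt
  have hr₂ : 0 < t ^ 2 - σ ^ 2 := by nlinarith
  set r := √(t ^ 2 - σ ^ 2) with hr_def
  have hr : 0 < r := sqrt_pos.mpr hr₂
  have hrr : r ^ 2 = t ^ 2 - σ ^ 2 := sq_sqrt hr₂.le
  -- `(α t)² − r² = σ² (1 − t²) > 0`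
  have hgap : r ^ 2 < (α * t) ^ 2 := by
    nlinarith [mul_pos (mul_pos hσ hσ) (by nlinarith : 0 < 1 - t ^ 2)]
  have hu : r / (α * t) ∈ Ioo (-1) 1 := by
    have hαt : 0 < α * t := mul_pos hα ht₀
    refine ⟨by linarith [div_pos hr hαt], (div_lt_one hαt).mpr ?_⟩
    exact lt_of_pow_lt_pow_left₀ 2 hαt.le hgap
  have hquot := (hasDerivAt_sqrt_sq_sub hr₂).div ((hasDerivAt_id' t).const_mul α) (by positivity)
  refine ((hasDerivAt_arctanh hu).comp t hquot).congr_deriv ?_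
  have h1t : 1 - t ^ 2 ≠ 0 := by nlinarith
  field_simp
  rw [← hr_def, hrr, div_eq_iff (by linarith)]
  linear_combination (-r * t ^ 2) * hασ

lemma hasDerivAt_arccosh_div {σ t : ℝ} (hσ : 0 < σ) (hσt : σ < t) :
    HasDerivAt (fun s => arccosh (s / σ)) (√(t ^ 2 - σ ^ 2))⁻¹ t := by
  have hr₂ : 0 < t ^ 2 - σ ^ 2 := by nlinarith
  have hsqrt : √((t / σ) ^ 2 - 1) = √(t ^ 2 - σ ^ 2) / σ := by
    rw [show (t / σ) ^ 2 - 1 = (t ^ 2 - σ ^ 2) / σ ^ 2 by field_simp, sqrt_div hr₂.le,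
      sqrt_sq hσ.le]
  -- `arccosh` is definitionally Mathlib's `Real.arcosh`.
  have h := (hasDerivAt_arcosh ((one_lt_div hσ).mpr hσt)).comp t ((hasDerivAt_id' t).div_const σ)
  refine h.congr_deriv ?_
  rw [hsqrt]
  field_simp

/-- Equation (106) of the paper: for `σ < t < 1`, the Liouville–Green variable
`ξ(t) = α·arctanh(√(t²−σ²)/(αt)) − arccosh(t/σ)` is differentiable with
`dξ/dt = √(t²−σ²)/(1−t²)`. -/
theorem stmt_13 (α σ t : ℝ) (hα0 : 0 < α) (hα1 : α < 1)
    (hσ : σ = Real.sqrt (1 - α ^ 2)) (ht1 : σ < t) (ht2 : t < 1) :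
    HasDerivAt
      (fun s : ℝ => α * arctanh (Real.sqrt (s ^ 2 - σ ^ 2) / (α * s)) - arccosh (s / σ))
      (Real.sqrt (t ^ 2 - σ ^ 2) / (1 - t ^ 2)) t := by
  have hα₂ : 0 < 1 - α ^ 2 := by nlinarith
  have hσ₀ : 0 < σ := hσ ▸ sqrt_pos.mpr hα₂
  have hασ : α ^ 2 + σ ^ 2 = 1 := by rw [hσ, sq_sqrt hα₂.le]; ring
  refine (((hasDerivAt_arctanh_sqrt_sq_sub_div hα0 hσ₀ hασ ht1 ht2).const_mul α).sub
    (hasDerivAt_arccosh_div hσ₀ ht1)).congr_deriv ?_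
  have hr₂ : 0 < t ^ 2 - σ ^ 2 := by nlinarith
  have hr : √(t ^ 2 - σ ^ 2) ≠ 0 := (sqrt_pos.mpr hr₂).ne'
  have h1t : 1 - t ^ 2 ≠ 0 := by nlinarith
  field_simp
  rw [sq_sqrt hr₂.le]
  linear_combination hασ
end

section
/- Let 0 < α < 1, σ = √(1−α²), and 0 < t < σ. Then the function t ↦ α·arccos(αt/(σ√(1−t²))) − arccos(t/σ) is differentiable on (0,σ) with derivative √(σ²−t²)/(1−t²). -/
/-!
With `σ² + α² = 1`, the argument `u = α t / (σ √(1 - t²))` of the first arccosine satisfies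
`1 - u² = (σ² - t²) / (σ² (1 - t²))`, so both arccosines have derivatives with the common factor
`1 / √(σ² - t²)`: the chain rule gives `-α / ((1 - t²) √(σ² - t²))` and `-1 / √(σ² - t²)`.
Their combination `(1 - t² - α²) / ((1 - t²) √(σ² - t²))` collapses to `√(σ² - t²) / (1 - t²)`.
-/

open Real

theorem HasDerivAt.arccos {f : ℝ → ℝ} {f' x : ℝ} (hf : HasDerivAt f f' x) (h : f x ^ 2 < 1) :
    HasDerivAt (fun y => arccos (f y)) (-(f' / √(1 - f x ^ 2))) x := by
  have h₁ : f x ≠ -1 := by rintro h'; rw [h'] at h; norm_num at h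
  have h₂ : f x ≠ 1 := by rintro h'; rw [h'] at h; norm_num at h
  exact ((hasDerivAt_arccos h₁ h₂).comp x hf).congr_deriv (by ring)

theorem hasDerivAt_div_sqrt_one_sub_sq {t : ℝ} (ht : t ^ 2 < 1) :
    HasDerivAt (fun s => s / √(1 - s ^ 2)) (1 / ((1 - t ^ 2) * √(1 - t ^ 2))) t := by
  have hpos : 0 < 1 - t ^ 2 := by linarith
  have hB : 0 < √(1 - t ^ 2) := sqrt_pos.mpr hpos
  have hsqrt : HasDerivAt (fun s => √(1 - s ^ 2)) (-(2 * t) / (2 * √(1 - t ^ 2))) t := by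
    refine HasDerivAt.sqrt ?_ hpos.ne'
    simpa using (hasDerivAt_pow 2 t).const_sub 1
  refine ((hasDerivAt_id' t).div hsqrt hB.ne').congr_deriv ?_
  field_simp
  rw [sq_sqrt hpos.le]
  ring

theorem hasDerivAt_arccos_div {σ t : ℝ} (hσ : 0 < σ) (ht : t ^ 2 < σ ^ 2) :
    HasDerivAt (fun s => arccos (s / σ)) (-(1 / √(σ ^ 2 - t ^ 2))) t := by
  have hA : 0 < σ ^ 2 - t ^ 2 := by linarith
  have hu : 1 - (t / σ) ^ 2 = (√(σ ^ 2 - t ^ 2) / σ) ^ 2 := by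
    rw [div_pow, div_pow, sq_sqrt hA.le]
    field_simp
  have hu1 : (t / σ) ^ 2 < 1 := by
    have : 0 < (√(σ ^ 2 - t ^ 2) / σ) ^ 2 := by positivity
    linarith
  refine (((hasDerivAt_id' t).div_const σ).arccos hu1).congr_deriv ?_
  rw [hu, sqrt_sq (by positivity)]
  field_simp

theorem hasDerivAt_arccos_mul_div_mul_sqrt {α σ t : ℝ} (hσ : 0 < σ) (hασ : α ^ 2 + σ ^ 2 = 1)
    (ht : t ^ 2 < σ ^ 2) :
    HasDerivAt (fun s => arccos (α * s / (σ * √(1 - s ^ 2))))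
      (-(α / ((1 - t ^ 2) * √(σ ^ 2 - t ^ 2)))) t := by
  have hB2 : 0 < 1 - t ^ 2 := by nlinarith
  have hA2 : 0 < σ ^ 2 - t ^ 2 := by linarith
  have hfun : ∀ s, α * s / (σ * √(1 - s ^ 2)) = α / σ * (s / √(1 - s ^ 2)) := fun s =>
    mul_div_mul_comm _ _ _ _
  have hu : 1 - (α / σ * (t / √(1 - t ^ 2))) ^ 2
      = (√(σ ^ 2 - t ^ 2) / (σ * √(1 - t ^ 2))) ^ 2 := by
    simp only [div_pow, mul_pow, sq_sqrt hA2.le, sq_sqrt hB2.le]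
    field_simp
    linear_combination (-t ^ 2) * hασ
  have hu1 : (α / σ * (t / √(1 - t ^ 2))) ^ 2 < 1 := by
    have : 0 < (√(σ ^ 2 - t ^ 2) / (σ * √(1 - t ^ 2))) ^ 2 := by positivity
    linarith
  simp only [hfun]
  refine (((hasDerivAt_div_sqrt_one_sub_sq (by linarith)).const_mul (α / σ)).arccos
    hu1).congr_deriv ?_
  rw [hu, sqrt_sq (by positivity)]
  field_simp

/-- Equation (107) of the paper: for `0 < t < σ = √(1−α²)`, the function
`t ↦ α·arccos(αt/(σ√(1−t²))) − arccos(t/σ)` is differentiable with derivative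
`√(σ²−t²)/(1−t²)`. -/
theorem stmt_14 (α σ t : ℝ) (hα0 : 0 < α) (hα1 : α < 1)
    (hσ : σ = Real.sqrt (1 - α ^ 2)) (ht0 : 0 < t) (ht1 : t < σ) :
    HasDerivAt
      (fun s : ℝ => α * Real.arccos (α * s / (σ * Real.sqrt (1 - s ^ 2)))
        - Real.arccos (s / σ))
      (Real.sqrt (σ ^ 2 - t ^ 2) / (1 - t ^ 2)) t := by
  have hσ0 : 0 < σ := hσ ▸ sqrt_pos.mpr (by nlinarith)
  have hσ2 : α ^ 2 + σ ^ 2 = 1 := by rw [hσ, sq_sqrt (by nlinarith)]; ring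
  have ht2 : t ^ 2 < σ ^ 2 := by nlinarith
  have hB2 : 0 < 1 - t ^ 2 := by nlinarith
  have hA2 : 0 < σ ^ 2 - t ^ 2 := by linarith
  refine (((hasDerivAt_arccos_mul_div_mul_sqrt hσ0 hσ2 ht2).const_mul α).sub
    (hasDerivAt_arccos_div hσ0 ht2)).congr_deriv ?_
  field_simp
  linear_combination -sq_sqrt hA2.le - hσ2
end

section
/- Let 0 < α < 1, σ = √(1−α²), 0 < β < 1, and set t = σ(1+β²)/(1−β²). Then σ < t, β = √((t−σ)/(t+σ)), and the map β(t) = √((t−σ)/(t+σ)) satisfies, for σ < t < 1, the identity ((1−t²)/√(t²−σ²))·(dβ/dt) = (1−β²)(α²(1+β²)² − 4β²)/(8σ²β²). -/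
/-!
With `u = √((t−σ)/(t+σ))` one has `√(t²−σ²) = (t+σ)u` and, by the chain rule,
`du/dt = σ/((t+σ)²u)`. Substituting `u² = (t−σ)/(t+σ)`, `1 − u² = 2σ/(t+σ)` and
`1 + u² = 2t/(t+σ)` turns both sides of the identity into `σ(1−t²)/((t+σ)²(t−σ))`,
once `α²` is replaced by `1 − σ²`. The map `b ↦ σ(1+b)/(1−b)` inverts `t ↦ (t−σ)/(t+σ)`,
which gives the first two claims with `b = β²`.
-/

lemma lt_mul_one_add_div_one_sub {σ b : ℝ} (hσ : 0 < σ) (hb0 : 0 < b) (hb1 : b < 1) :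
    σ < σ * (1 + b) / (1 - b) := by
  rw [lt_div_iff₀ (by linarith)]
  nlinarith [mul_pos hσ hb0]

lemma sub_div_add_eq_iff {σ t b : ℝ} (htσ : t + σ ≠ 0) (hb : b ≠ 1) :
    (t - σ) / (t + σ) = b ↔ t = σ * (1 + b) / (1 - b) := by
  rw [div_eq_iff htσ, eq_div_iff (sub_ne_zero.2 hb.symm)]
  constructor <;> intro h <;> linear_combination h

lemma hasDerivAt_sqrt_sub_div_add {σ t : ℝ} (h₁ : t - σ ≠ 0) (h₂ : t + σ ≠ 0) :
    HasDerivAt (fun s : ℝ => √((s - σ) / (s + σ)))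
      (σ / ((t + σ) ^ 2 * √((t - σ) / (t + σ)))) t := by
  have hquot : HasDerivAt (fun s : ℝ => (s - σ) / (s + σ)) (2 * σ / (t + σ) ^ 2) t :=
    (((hasDerivAt_id t).sub_const σ).fun_div ((hasDerivAt_id t).add_const σ) h₂).congr_deriv
      (by rw [id]; ring)
  refine ((Real.hasDerivAt_sqrt (div_ne_zero h₁ h₂)).comp t hquot).congr_deriv ?_
  rw [div_mul_div_comm, one_mul, mul_assoc, mul_div_mul_left _ _ two_ne_zero, mul_comm]

lemma sqrt_sq_sub_sq_eq {σ t : ℝ} (h : 0 < t + σ) :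
    √(t ^ 2 - σ ^ 2) = (t + σ) * √((t - σ) / (t + σ)) := by
  have hfac : t ^ 2 - σ ^ 2 = (t + σ) ^ 2 * ((t - σ) / (t + σ)) := by
    field_simp
    ring
  rw [hfac, Real.sqrt_mul (sq_nonneg _), Real.sqrt_sq h.le]

lemma one_sub_sq_div_mul_eq {σ t u : ℝ} (hσ : σ ≠ 0) (h₁ : t - σ ≠ 0) (h₂ : t + σ ≠ 0)
    (hu : u ^ 2 = (t - σ) / (t + σ)) :
    (1 - t ^ 2) / ((t + σ) * u) * (σ / ((t + σ) ^ 2 * u))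
      = (1 - u ^ 2) * ((1 - σ ^ 2) * (1 + u ^ 2) ^ 2 - 4 * u ^ 2) / (8 * σ ^ 2 * u ^ 2) := by
  have hu0 : u ^ 2 ≠ 0 := hu ▸ div_ne_zero h₁ h₂
  calc (1 - t ^ 2) / ((t + σ) * u) * (σ / ((t + σ) ^ 2 * u))
      = σ * (1 - t ^ 2) / ((t + σ) ^ 3 * u ^ 2) := by
        rw [div_mul_div_comm]
        congr 1 <;> ring
    _ = _ := by
      rw [hu]
      field_simp
      ring

/-- Equations (109), (111) and (112) of the paper: with `σ = √(1−α²)`, `0 < β < 1`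
and `t = σ(1+β²)/(1−β²)`, one has `σ < t` and `β = √((t−σ)/(t+σ))`; moreover, for
`σ < t < 1` the map `β(t) = √((t−σ)/(t+σ))` satisfies
`((1−t²)/√(t²−σ²))·(dβ/dt) = (1−β²)(α²(1+β²)² − 4β²)/(8σ²β²)`. -/
theorem stmt_15 (α σ β t : ℝ) (hα0 : 0 < α) (hα1 : α < 1)
    (hσ : σ = Real.sqrt (1 - α ^ 2)) (hβ0 : 0 < β) (hβ1 : β < 1)
    (ht : t = σ * (1 + β ^ 2) / (1 - β ^ 2)) :
    σ < t ∧
    β = Real.sqrt ((t - σ) / (t + σ)) ∧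
    (∀ t' : ℝ, σ < t' → t' < 1 →
      ((1 - t' ^ 2) / Real.sqrt (t' ^ 2 - σ ^ 2))
          * deriv (fun s : ℝ => Real.sqrt ((s - σ) / (s + σ))) t'
        = (1 - Real.sqrt ((t' - σ) / (t' + σ)) ^ 2)
            * (α ^ 2 * (1 + Real.sqrt ((t' - σ) / (t' + σ)) ^ 2) ^ 2
              - 4 * Real.sqrt ((t' - σ) / (t' + σ)) ^ 2)
            / (8 * σ ^ 2 * Real.sqrt ((t' - σ) / (t' + σ)) ^ 2)) := by
  have hα : 0 < 1 - α ^ 2 := by nlinarith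
  have hσ0 : 0 < σ := hσ ▸ Real.sqrt_pos.2 hα
  have hα2 : α ^ 2 = 1 - σ ^ 2 := by rw [hσ, Real.sq_sqrt hα.le]; ring
  have hβ2 : β ^ 2 < 1 := by nlinarith
  have hσt : σ < t := ht ▸ lt_mul_one_add_div_one_sub hσ0 (by positivity) hβ2
  refine ⟨hσt, ?_, fun t' h₁ _ => ?_⟩
  · rw [(sub_div_add_eq_iff (by linarith) hβ2.ne).2 ht, Real.sqrt_sq hβ0.le]
  · have hpos : 0 < (t' - σ) / (t' + σ) := div_pos (by linarith) (by linarith)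
    rw [(hasDerivAt_sqrt_sub_div_add (by linarith) (by linarith)).deriv,
      sqrt_sq_sub_sq_eq (by linarith), hα2]
    exact one_sub_sq_div_mul_eq hσ0.ne' (by linarith) (by linarith) (Real.sq_sqrt hpos.le)
end
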